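/- arXiv:1401.1626 — 8 statements merged into one kernel-verified Lean document; each statement's English description precedes it below -/
import Mathlib

section
/- For every real rate R with 0 < R < 1, the equation G = 1 - exp(-G/R) has exactly one solution G in the open interval (0,1); that is, there exists a unique x ∈ (0,1) with x = 1 - exp(-x/R). -/
/-- Auxiliary: no two distinct fixed points in (0,1). -/
lemma csa_aux (R : ℝ) (hR0 : 0 < R) (x y : ℝ)
    (hx : x ∈ Set.Ioo (0 : ℝ) 1) (hy : y ∈ Set.Ioo (0 : ℝ) 1)
    (hfx : x = 1 - Real.exp (-x / R)) (hfy : y = 1 - Real.exp (-y / R))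
    (hxy : x < y) : False := by
  obtain ⟨hx0, hx1⟩ := hx
  obtain ⟨hy0, hy1⟩ := hy
  set t : ℝ := x / y with ht
  have hy0' : (0:ℝ) < y := hy0
  have ht0 : 0 < t := div_pos hx0 hy0'
  have ht1 : t < 1 := (div_lt_one hy0').mpr hxy
  have hne : (0:ℝ) ≠ -y / R := by
    have : 0 < y / R := div_pos hy0' hR0
    intro h
    rw [neg_div] at h
    linarith
  have key := strictConvexOn_exp.2 (Set.mem_univ (0:ℝ)) (Set.mem_univ (-y / R))
      hne (by linarith : (0:ℝ) < 1 - t) ht0 (by ring)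
  have hcomb : (1 - t) • (0:ℝ) + t • (-y / R) = -x / R := by
    simp only [smul_eq_mul, mul_zero, zero_add]; rw [ht]; field_simp [hy0'.ne', hR0.ne']
  rw [hcomb, Real.exp_zero] at key
  -- key : exp (-x/R) < (1-t) * 1 + t * exp (-y/R)
  have hex : Real.exp (-x / R) = 1 - x := by linarith
  have hey : Real.exp (-y / R) = 1 - y := by linarith
  simp only [smul_eq_mul] at key
  rw [hex, hey] at key
  have : t * y = x := by rw [ht]; field_simp [hy0'.ne']
  nlinarith [key]

/-- For every real rate `R` with `0 < R < 1`, the equation `G = 1 - exp (-G/R)` has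
exactly one solution `G` in the open interval `(0,1)`. -/
theorem csa_fixed_point_exists_unique (R : ℝ) (hR0 : 0 < R) (hR1 : R < 1) :
    ∃! x : ℝ, x ∈ Set.Ioo (0 : ℝ) 1 ∧ x = 1 - Real.exp (-x / R) := by
  set g : ℝ → ℝ := fun x => x - 1 + Real.exp (-x / R) with hg
  set a : ℝ := (1 - R) / 2 with ha
  have ha0 : 0 < a := by simp [ha]; linarith
  have ha1 : a < 1 := by simp [ha]; linarith
  -- g a < 0
  have hexp : a / R + 1 < Real.exp (a / R) :=
    Real.add_one_lt_exp (ne_of_gt (div_pos ha0 hR0))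
  have hpos : (0:ℝ) < 1 + a / R := by positivity
  have hlt : Real.exp (-a / R) < (1 + a / R)⁻¹ := by
    rw [neg_div, Real.exp_neg]
    exact inv_strictAnti₀ hpos (by linarith)
  have hga : g a < 0 := by
    have hinv : (1 + a / R)⁻¹ = R / (R + a) := by
      field_simp
    rw [hinv] at hlt
    have hRa : 0 < R + a := by linarith
    have h2 : R / (R + a) < 1 - a := by
      rw [div_lt_iff₀ hRa]
      nlinarith [sq_nonneg a]
    simp only [hg]
    linarith
  have hg1 : 0 < g 1 := by
    simp only [hg]
    have := Real.exp_pos (-1 / R)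
    linarith
  have hcont : ContinuousOn g (Set.Icc a 1) := by
    apply Continuous.continuousOn
    fun_prop
  have hmem : (0:ℝ) ∈ Set.Ioo (g a) (g 1) := ⟨hga, hg1⟩
  obtain ⟨c, hc, hgc⟩ := intermediate_value_Ioo (le_of_lt ha1) hcont hmem
  have hcIoo : c ∈ Set.Ioo (0:ℝ) 1 := ⟨lt_trans ha0 hc.1, hc.2⟩
  refine ⟨c, ⟨hcIoo, ?_⟩, ?_⟩
  · simp only [hg] at hgc
    linarith
  · rintro y ⟨hy, hfy⟩
    have hfc : c = 1 - Real.exp (-c / R) := by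
      simp only [hg] at hgc; linarith
    rcases lt_trichotomy y c with h | h | h
    · exact absurd (csa_aux R hR0 y c hy hcIoo hfy hfc h) (fun x => x)
    · exact h
    · exact absurd (csa_aux R hR0 c y hcIoo hy hfc hfy h) (fun x => x)
end

section
/- Let 0 < R < 1 and let 𝔾(R) ∈ (0,1) be the unique solution of 𝔾 = 1 - exp(-𝔾/R). Then for every real G with 0 < G ≤ 1 satisfying G ≤ 1 - exp(-G/R), one has G ≤ 𝔾(R). (Capacity bound for CSA: the capacity G*(𝒞,Λ) of any CSA scheme of rate R satisfies G* ≤ 𝔾(R), since successful asymptotic decoding at load G forces the area condition G ≤ 1 - exp(-G/R).) -/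
/-- Capacity bound for CSA: if `𝔾 ∈ (0,1)` is the unique solution of
`𝔾 = 1 - exp (-𝔾/R)` for rate `0 < R < 1`, then any load `G` with
`0 < G ≤ 1` satisfying `G ≤ 1 - exp (-G/R)` obeys `G ≤ 𝔾`. -/
theorem csa_capacity_bound (R Gbb : ℝ) (hR0 : 0 < R) (hR1 : R < 1)
    (hGbb : Gbb ∈ Set.Ioo (0 : ℝ) 1)
    (hfix : Gbb = 1 - Real.exp (-Gbb / R))
    (huniq : ∀ y ∈ Set.Ioo (0 : ℝ) 1, y = 1 - Real.exp (-y / R) → y = Gbb)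
    (G : ℝ) (hG0 : 0 < G) (hG1 : G ≤ 1)
    (hcond : G ≤ 1 - Real.exp (-G / R)) :
    G ≤ Gbb := by
  by_contra h
  push_neg at h
  set f : ℝ → ℝ := fun x => x - (1 - Real.exp (-x / R)) with hf
  have hcont : ContinuousOn f (Set.Icc G 1) := by
    apply Continuous.continuousOn
    fun_prop
  have hfG : f G ≤ 0 := by simp [hf]; linarith
  have hf1 : 0 < f 1 := by
    simp only [hf]
    have := Real.exp_pos (-1 / R)
    linarith
  have hmem : (0 : ℝ) ∈ Set.Icc (f G) (f 1) := ⟨hfG, le_of_lt hf1⟩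
  obtain ⟨y, hy, hy0⟩ := intermediate_value_Icc hG1 hcont hmem
  have hy1 : y < 1 := by
    rcases lt_or_eq_of_le hy.2 with h' | h'
    · exact h'
    · exfalso; rw [h'] at hy0; linarith
  have hyfix : y = 1 - Real.exp (-y / R) := by
    have : y - (1 - Real.exp (-y / R)) = 0 := hy0
    linarith
  have := huniq y ⟨lt_of_lt_of_le hG0 hy.1, hy1⟩ hyfix
  have : G ≤ Gbb := this ▸ hy.1
  linarith
end

section
/- Let k ≥ 1 and n ≥ 1 be integers and let G be a k×n matrix over GF(2) with rank(G) = k. Define, for 0 ≤ g ≤ n, the g-th un-normalized information function ẽ_g as the sum, over all g-element subsets S of the column index set, of the rank of the k×g submatrix of G formed by the columns in S, and define f_b(p) = (1/n) Σ_{t=0}^{n-1} p^t (1-p)^{n-1-t} [ (n-t)·ẽ_{n-t} - (t+1)·ẽ_{n-1-t} ]. Then ∫₀¹ f_b(p) dp = k/n. (Area Theorem instance: the area under the MAP EXIT function of an (n,k) linear code equals its rate.) -/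
open Finset

/-- The `g`-th un-normalized information function of a `k × n` matrix over GF(2):
the sum, over all `g`-element subsets `S` of the column indices, of the rank of the
`k × g` submatrix formed by the columns in `S`. -/
noncomputable def unnormInfoFun {k n : ℕ} (G : Matrix (Fin k) (Fin n) (ZMod 2)) (g : ℕ) : ℕ :=
  ∑ S ∈ Finset.powersetCard g (Finset.univ : Finset (Fin n)),
    (G.submatrix id (fun j : {x : Fin n // x ∈ S} => (j : Fin n))).rank

/-- The MAP EXIT function of the code generated by `G` (burst-node EXIT function):
`f_b(p) = (1/n) ∑_{t=0}^{n-1} p^t (1-p)^{n-1-t} [(n-t) ẽ_{n-t} - (t+1) ẽ_{n-1-t}]`. -/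
noncomputable def mapExitFun {k n : ℕ} (G : Matrix (Fin k) (Fin n) (ZMod 2)) (p : ℝ) : ℝ :=
  (1 / (n : ℝ)) * ∑ t ∈ Finset.range n,
    p ^ t * (1 - p) ^ (n - 1 - t) *
      (((n : ℝ) - t) * (unnormInfoFun G (n - t) : ℝ)
        - ((t : ℝ) + 1) * (unnormInfoFun G (n - 1 - t) : ℝ))

/-- Rank is invariant under column reindexing by an equivalence. -/
lemma rank_submatrix_id_equiv {R : Type*} [CommRing R] {m o n : Type*} [Fintype n] [Fintype o]
    (A : Matrix m n R) (e : o ≃ n) : (A.submatrix id ⇑e).rank = A.rank := by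
  rw [Matrix.rank, Matrix.rank, Matrix.mulVecLin_submatrix,
    show LinearMap.funLeft R R (id : m → m) = LinearMap.id from rfl,
    LinearMap.id_comp, LinearMap.range_comp,
    show LinearMap.funLeft R R ⇑e.symm = LinearEquiv.funCongrLeft R R e.symm from rfl,
    LinearEquiv.range, Submodule.map_top]

/-- The Euler beta integral with natural exponents. -/
lemma integral_pow_mul_one_sub_pow (a b : ℕ) :
    ∫ x in (0:ℝ)..1, x ^ a * (1 - x) ^ b
      = (a.factorial * b.factorial : ℝ) / ((a + b + 1).factorial : ℝ) := by
  have hs : 0 < Complex.re ((a : ℂ) + 1) := by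
    simp only [Complex.add_re, Complex.natCast_re, Complex.one_re]
    positivity
  have ht : 0 < Complex.re ((b : ℂ) + 1) := by
    simp only [Complex.add_re, Complex.natCast_re, Complex.one_re]
    positivity
  have h := Complex.Gamma_mul_Gamma_eq_betaIntegral hs ht
  have hbeta : Complex.betaIntegral ((a : ℂ) + 1) ((b : ℂ) + 1)
      = ((∫ x in (0:ℝ)..1, x ^ a * (1 - x) ^ b : ℝ) : ℂ) := by
    rw [Complex.betaIntegral, ← intervalIntegral.integral_ofReal]
    apply intervalIntegral.integral_congr
    intro x _
    have h1 : (a : ℂ) + 1 - 1 = ((a : ℕ) : ℂ) := by ring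
    have h2 : (b : ℂ) + 1 - 1 = ((b : ℕ) : ℂ) := by ring
    simp only [h1, h2, Complex.cpow_natCast]
    push_cast
    ring
  have hsum : (a : ℂ) + 1 + ((b : ℂ) + 1) = ((a + b + 1 : ℕ) : ℂ) + 1 := by push_cast; ring
  rw [hbeta, Complex.Gamma_nat_eq_factorial, Complex.Gamma_nat_eq_factorial, hsum,
    Complex.Gamma_nat_eq_factorial] at h
  have hfacR : (((a + b + 1).factorial : ℕ) : ℝ) ≠ 0 :=
    Nat.cast_ne_zero.mpr (Nat.factorial_ne_zero _)
  rw [eq_div_iff hfacR, mul_comm]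
  exact_mod_cast h.symm

/-- Area Theorem instance: the area under the MAP EXIT function of an `(n,k)` binary
linear code with full-rank `k × n` generator matrix equals its rate `k/n`. -/
theorem area_under_map_exit_eq_rate (k n : ℕ) (hk : 1 ≤ k) (hn : 1 ≤ n)
    (G : Matrix (Fin k) (Fin n) (ZMod 2)) (hrank : G.rank = k) :
    ∫ p in (0 : ℝ)..1, mapExitFun G p = (k : ℝ) / n := by
  set c : ℕ → ℝ := fun g => (unnormInfoFun G g : ℝ) / (n.choose g : ℝ) with hc
  -- value at the endpoints
  have hen : (unnormInfoFun G n : ℝ) = k := by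
    have : unnormInfoFun G n = k := by
      rw [unnormInfoFun,
        show Finset.powersetCard n (Finset.univ : Finset (Fin n)) = {Finset.univ} from by
          simpa using Finset.powersetCard_self (Finset.univ : Finset (Fin n)),
        Finset.sum_singleton]
      rw [show (G.submatrix id
            (fun j : {x : Fin n // x ∈ (Finset.univ : Finset (Fin n))} => (j : Fin n))).rank
          = G.rank from
        rank_submatrix_id_equiv G (Equiv.subtypeUnivEquiv fun x => Finset.mem_univ x), hrank]
    rw [this]
  have he0 : (unnormInfoFun G 0 : ℝ) = 0 := by
    have : unnormInfoFun G 0 = 0 := by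
      rw [unnormInfoFun, Finset.powersetCard_zero, Finset.sum_singleton]
      have h1 := Matrix.rank_le_card_width
        (G.submatrix id (fun j : {x : Fin n // x ∈ (∅ : Finset (Fin n))} => (j : Fin n)))
      simpa using h1
    simp [this]
  -- compute the integral term by term
  have hint : ∀ t ∈ Finset.range n, IntervalIntegrable
      (fun p : ℝ => p ^ t * (1 - p) ^ (n - 1 - t) *
        (((n : ℝ) - t) * (unnormInfoFun G (n - t) : ℝ)
          - ((t : ℝ) + 1) * (unnormInfoFun G (n - 1 - t) : ℝ)))
      MeasureTheory.volume 0 1 := by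
    intro t _
    exact (Continuous.intervalIntegrable (by continuity) 0 1)
  have hswap : ∫ p in (0:ℝ)..1, mapExitFun G p
      = (1 / (n : ℝ)) * ∑ t ∈ Finset.range n,
          (∫ p in (0:ℝ)..1, p ^ t * (1 - p) ^ (n - 1 - t)) *
            (((n : ℝ) - t) * (unnormInfoFun G (n - t) : ℝ)
              - ((t : ℝ) + 1) * (unnormInfoFun G (n - 1 - t) : ℝ)) := by
    simp only [mapExitFun]
    rw [intervalIntegral.integral_const_mul, intervalIntegral.integral_finset_sum hint]
    congr 1
    refine Finset.sum_congr rfl fun t _ => ?_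
    rw [← intervalIntegral.integral_mul_const]
  rw [hswap]
  -- evaluate each term as a telescoping difference
  have hterm : ∀ t ∈ Finset.range n,
      (∫ p in (0:ℝ)..1, p ^ t * (1 - p) ^ (n - 1 - t)) *
          (((n : ℝ) - t) * (unnormInfoFun G (n - t) : ℝ)
            - ((t : ℝ) + 1) * (unnormInfoFun G (n - 1 - t) : ℝ))
        = c (n - t) - c (n - 1 - t) := by
    intro t ht
    rw [Finset.mem_range] at ht
    obtain ⟨m, rfl⟩ : ∃ m, n = t + m + 1 := ⟨n - 1 - t, by omega⟩
    have h1 : t + m + 1 - t = m + 1 := by omega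
    have h2 : t + m + 1 - 1 - t = m := by omega
    rw [h1, h2, integral_pow_mul_one_sub_pow t m]
    have hc1 : ((t + m + 1).choose (m + 1) : ℝ) * (m + 1).factorial * t.factorial
        = (t + m + 1).factorial := by
      have := Nat.choose_mul_factorial_mul_factorial
        (show m + 1 ≤ t + m + 1 by omega) (n := t + m + 1)
      have h3 : t + m + 1 - (m + 1) = t := by omega
      rw [h3] at this
      exact_mod_cast this
    have hc2 : ((t + m + 1).choose m : ℝ) * m.factorial * (t + 1).factorial
        = (t + m + 1).factorial := by
      have := Nat.choose_mul_factorial_mul_factorial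
        (show m ≤ t + m + 1 by omega) (n := t + m + 1)
      have h3 : t + m + 1 - m = t + 1 := by omega
      rw [h3] at this
      exact_mod_cast this
    have hfacne : ((t + m + 1).factorial : ℝ) ≠ 0 := by
      exact_mod_cast Nat.factorial_ne_zero _
    have hch1 : ((t + m + 1).choose (m + 1) : ℝ) ≠ 0 := by
      exact_mod_cast (Nat.choose_pos (show m + 1 ≤ t + m + 1 by omega)).ne'
    have hch2 : ((t + m + 1).choose m : ℝ) ≠ 0 := by
      exact_mod_cast (Nat.choose_pos (show m ≤ t + m + 1 by omega)).ne'
    have hfac1 : ((m + 1).factorial : ℝ) = ((m : ℝ) + 1) * (m.factorial : ℝ) := by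
      rw [Nat.factorial_succ]; push_cast; ring
    have hfac2 : ((t + 1).factorial : ℝ) = ((t : ℝ) + 1) * (t.factorial : ℝ) := by
      rw [Nat.factorial_succ]; push_cast; ring
    simp only [hc]
    rw [div_sub_div _ _ hch1 hch2, div_mul_eq_mul_div,
      div_eq_div_iff hfacne (mul_ne_zero hch1 hch2)]
    have k1 : ((t + m + 1).choose (m + 1) : ℝ) * (((m : ℝ) + 1) * (m.factorial : ℝ))
        * (t.factorial : ℝ) = ((t + m + 1).factorial : ℝ) := by rw [← hfac1]; exact hc1
    have k2 : ((t + m + 1).choose m : ℝ) * (m.factorial : ℝ)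
        * (((t : ℝ) + 1) * (t.factorial : ℝ)) = ((t + m + 1).factorial : ℝ) := by
      rw [← hfac2]; exact hc2
    push_cast
    linear_combination ((unnormInfoFun G (m + 1) : ℝ) * ((t + m + 1).choose m : ℝ)) * k1
      - (((t + m + 1).choose (m + 1) : ℝ) * (unnormInfoFun G m : ℝ)) * k2
  rw [Finset.sum_congr rfl hterm]
  -- telescope
  have hrefl : ∑ t ∈ Finset.range n, (c (n - t) - c (n - 1 - t))
      = ∑ t ∈ Finset.range n, (c (t + 1) - c t) := by
    rw [← Finset.sum_range_reflect (fun j => c (j + 1) - c j) n]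
    refine Finset.sum_congr rfl fun t ht => ?_
    rw [Finset.mem_range] at ht
    congr 2
    omega
  rw [hrefl, Finset.sum_range_sub]
  have hcn : c n = k := by simp [hc, hen, Nat.choose_self]
  have hc0 : c 0 = 0 := by simp [hc, he0]
  rw [hcn, hc0, sub_zero]
  field_simp
end

section
/- Let k ≥ 1 and n ≥ 2 be integers and let G be a k×n matrix over GF(2) with rank(G) = k such that the code 𝒞 = { xG : x ∈ GF(2)^k } contains no codeword of Hamming weight exactly 1. Then the sum, over all 2-element subsets {i,j} of the column index set, of the quantity k - rank(G_{∖{i,j}}), where G_{∖{i,j}} is the k×(n-2) matrix obtained from G by deleting columns i and j, equals B₂, the number of codewords of 𝒞 of Hamming weight exactly 2. Equivalently, k·C(n,2) - ẽ_{n-2} = B₂. -/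
open Finset Matrix

noncomputable section AuxRDP

namespace AuxRDP

variable {k n : ℕ}

/-- Indicator vector of a finset. -/
def ind (S : Finset (Fin n)) : Fin n → ZMod 2 := fun j => if j ∈ S then 1 else 0

lemma zmod2_ne_zero {a : ZMod 2} (h : a ≠ 0) : a = 1 := by revert h; revert a; decide

lemma ind_injective : Function.Injective (ind (n := n)) := by
  intro S S' h
  ext j
  constructor <;> intro hj
  · by_contra hj'
    have := congrFun h j
    simp [ind, hj, hj'] at this
  · by_contra hj'
    have := congrFun h j
    simp [ind, hj, hj'] at this

lemma hammingNorm_eq_card_filter (c : Fin n → ZMod 2) :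
    hammingNorm c = (Finset.univ.filter fun j => c j ≠ 0).card := rfl

lemma eq_ind_filter (c : Fin n → ZMod 2) :
    c = ind (Finset.univ.filter fun j => c j ≠ 0) := by
  funext j
  by_cases h : c j = 0
  · simp [ind, h]
  · simp [ind, h, zmod2_ne_zero h]

/-- rank + nullity for the row map. -/
lemma rank_add_nullity {m : Type*} [Fintype m] (M : Matrix (Fin k) m (ZMod 2)) :
    M.rank + Module.finrank (ZMod 2) (LinearMap.ker M.vecMulLinear) = k := by
  have h1 : M.vecMulLinear = Mᵀ.mulVecLin := by
    rw [← Matrix.vecMulLinear_transpose, Matrix.transpose_transpose]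
  have h2 := LinearMap.finrank_range_add_finrank_ker (M.vecMulLinear)
  rw [h1] at h2
  have h3 : Mᵀ.rank = M.rank := Matrix.rank_transpose M
  have h4 : Module.finrank (ZMod 2) (Fin k → ZMod 2) = k := Module.finrank_fin_fun (ZMod 2)
  rw [h4] at h2
  rw [show Mᵀ.rank = Module.finrank (ZMod 2) (LinearMap.range Mᵀ.mulVecLin) from rfl] at h3
  rw [← h1] at h2 h3
  omega

lemma rank_submatrix_equiv {m o : Type*} [Fintype m] [Fintype o] [DecidableEq m] [DecidableEq o]
    (M : Matrix (Fin k) m (ZMod 2)) (e : o ≃ m) :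
    (M.submatrix id e).rank = M.rank := by
  rw [Matrix.rank, Matrix.rank, Matrix.mulVecLin_submatrix]
  have hid : LinearMap.funLeft (ZMod 2) (ZMod 2) (id : Fin k → Fin k) = LinearMap.id :=
    rfl
  rw [hid, LinearMap.id_comp,
    LinearMap.range_comp_of_range_eq_top M.mulVecLin
      (LinearMap.range_eq_top.mpr
        (LinearMap.funLeft_surjective_of_injective _ _ _ e.symm.injective))]


lemma vecMul_injective (G : Matrix (Fin k) (Fin n) (ZMod 2)) (hrank : G.rank = k) :
    Function.Injective (fun x : Fin k → ZMod 2 => Matrix.vecMul x G) := by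
  have h := rank_add_nullity G
  rw [hrank] at h
  have h0 : Module.finrank (ZMod 2) (LinearMap.ker G.vecMulLinear) = 0 := by omega
  have hker : LinearMap.ker G.vecMulLinear = ⊥ := Submodule.finrank_eq_zero.mp h0
  have hinj := LinearMap.ker_eq_bot.mp hker
  intro x y hxy
  exact hinj (by simpa [Matrix.vecMulLinear_apply] using hxy)

/-- Any nonzero element of the "kernel at S" gives the indicator codeword. -/
lemma nonzero_ker_eq_ind (G : Matrix (Fin k) (Fin n) (ZMod 2)) (hrank : G.rank = k)
    (hmd : ∀ x : Fin k → ZMod 2, hammingNorm (Matrix.vecMul x G) ≠ 1)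
    {S : Finset (Fin n)} (hS : S.card = 2) {y : Fin k → ZMod 2} (hy : y ≠ 0)
    (hyk : ∀ j : Fin n, j ∉ S → Matrix.vecMul y G j = 0) :
    Matrix.vecMul y G = ind S := by
  set c := Matrix.vecMul y G with hc
  have hcne : c ≠ 0 := by
    intro h0
    exact hy (vecMul_injective G hrank (a₁ := y) (a₂ := 0) (by simpa [Matrix.zero_vecMul] using h0))
  set supp := Finset.univ.filter fun j => c j ≠ 0 with hsupp
  have hsub : supp ⊆ S := by
    intro j hj
    rw [hsupp, Finset.mem_filter] at hj
    by_contra hjs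
    exact hj.2 (hyk j hjs)
  have hwt : hammingNorm c = supp.card := rfl
  have hle : supp.card ≤ 2 := hS ▸ Finset.card_le_card hsub
  have hne0 : hammingNorm c ≠ 0 := hammingNorm_ne_zero_iff.mpr hcne
  have hne1 : hammingNorm c ≠ 1 := hmd y
  have h2 : supp.card = 2 := by omega
  have hseq : supp = S := Finset.eq_of_subset_of_card_le hsub (by omega)
  calc c = ind supp := eq_ind_filter c
  _ = ind S := by rw [hseq]

/-- The key per-subset identity. -/
lemma key (G : Matrix (Fin k) (Fin n) (ZMod 2)) (hrank : G.rank = k)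
    (hmd : ∀ x : Fin k → ZMod 2, hammingNorm (Matrix.vecMul x G) ≠ 1)
    {S : Finset (Fin n)} (hS : S.card = 2) :
    k - (G.submatrix id (fun j : {x : Fin n // x ∉ S} => (j : Fin n))).rank
      = if ∃ x : Fin k → ZMod 2, Matrix.vecMul x G = ind S then 1 else 0 := by
  classical
  set M := G.submatrix id (fun j : {x : Fin n // x ∉ S} => (j : Fin n)) with hM
  have hnull := rank_add_nullity M
  have hrk : k - M.rank = Module.finrank (ZMod 2) (LinearMap.ker M.vecMulLinear) := by omega
  have hmem : ∀ y : Fin k → ZMod 2, y ∈ LinearMap.ker M.vecMulLinear ↔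
      ∀ j : Fin n, j ∉ S → Matrix.vecMul y G j = 0 := by
    intro y
    rw [LinearMap.mem_ker]
    constructor
    · intro h j hj
      have := congrFun h ⟨j, hj⟩
      simpa [hM, Matrix.vecMulLinear_apply, Matrix.vecMul, dotProduct,
        Matrix.submatrix] using this
    · intro h
      funext j
      have := h (j : Fin n) j.2
      simpa [hM, Matrix.vecMulLinear_apply, Matrix.vecMul, dotProduct,
        Matrix.submatrix] using this
  rw [hrk]
  by_cases hP : ∃ x : Fin k → ZMod 2, Matrix.vecMul x G = ind S
  · obtain ⟨x₀, hx₀⟩ := hP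
    have hx₀k : x₀ ∈ LinearMap.ker M.vecMulLinear := by
      rw [hmem]
      intro j hj
      rw [hx₀]
      simp [ind, hj]
    have hx₀ne : x₀ ≠ 0 := by
      intro h0
      obtain ⟨i, hi⟩ := Finset.card_pos.mp (by omega : 0 < S.card)
      have := congrFun hx₀ i
      rw [h0] at this
      simp [ind, hi, Matrix.zero_vecMul] at this
    have hspan : LinearMap.ker M.vecMulLinear = Submodule.span (ZMod 2) {x₀} := by
      apply le_antisymm
      · intro y hy
        by_cases hy0 : y = 0
        · simp [hy0]
        · have hcy := nonzero_ker_eq_ind G hrank hmd hS hy0 ((hmem y).mp hy)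
          have : y = x₀ := vecMul_injective G hrank (by simpa using hcy.trans hx₀.symm)
          rw [this]
          exact Submodule.mem_span_singleton_self x₀
      · rw [Submodule.span_le, Set.singleton_subset_iff]
        exact hx₀k
    rw [if_pos ⟨x₀, hx₀⟩, hspan]
    exact finrank_span_singleton hx₀ne
  · rw [if_neg hP]
    have hbot : LinearMap.ker M.vecMulLinear = ⊥ := by
      rw [Submodule.eq_bot_iff]
      intro y hy
      by_contra hy0
      exact hP ⟨y, nonzero_ker_eq_ind G hrank hmd hS hy0 ((hmem y).mp hy)⟩
    rw [hbot]
    exact finrank_bot (ZMod 2) _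


lemma hammingNorm_ind (S : Finset (Fin n)) : hammingNorm (ind S) = S.card := by
  rw [hammingNorm_eq_card_filter]
  congr 1
  ext j
  by_cases h : j ∈ S <;> simp [ind, h]

end AuxRDP

end AuxRDP


/-- The number of codewords of Hamming weight exactly `2` of the code generated by `G`. -/
noncomputable def numWeightTwo {k n : ℕ} (G : Matrix (Fin k) (Fin n) (ZMod 2)) : ℕ :=
  Set.ncard {c : Fin n → ZMod 2 | (∃ x : Fin k → ZMod 2, Matrix.vecMul x G = c) ∧
    hammingNorm c = 2}

open AuxRDP

/-- For a full-rank `k × n` GF(2) matrix `G` (`n ≥ 2`) whose code has no codeword of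
Hamming weight `1`: the sum over all `2`-element column subsets `S` of
`k - rank(G with the columns of S deleted)` equals `B₂`, the number of weight-`2`
codewords; equivalently `k C(n,2) - ẽ_{n-2} = B₂`. -/
theorem sum_rank_deficiency_pairs_eq_numWeightTwo (k n : ℕ) (hk : 1 ≤ k) (hn : 2 ≤ n)
    (G : Matrix (Fin k) (Fin n) (ZMod 2)) (hrank : G.rank = k)
    (hmd : ∀ x : Fin k → ZMod 2, hammingNorm (Matrix.vecMul x G) ≠ 1) :
    (∑ S ∈ Finset.powersetCard 2 (Finset.univ : Finset (Fin n)),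
        (k - (G.submatrix id (fun j : {x : Fin n // x ∉ S} => (j : Fin n))).rank)
      = numWeightTwo G) ∧
    k * Nat.choose n 2 - unnormInfoFun G (n - 2) = numWeightTwo G := by
  classical
  set P2 := Finset.powersetCard 2 (Finset.univ : Finset (Fin n)) with hP2
  set T := P2.filter (fun S => ∃ x : Fin k → ZMod 2, Matrix.vecMul x G = ind S) with hT
  -- numWeightTwo = T.card
  have hset : {c : Fin n → ZMod 2 | (∃ x : Fin k → ZMod 2, Matrix.vecMul x G = c) ∧
      hammingNorm c = 2} = ind '' (T : Set (Finset (Fin n))) := by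
    ext c
    constructor
    · rintro ⟨⟨x, hx⟩, hwt⟩
      set S := Finset.univ.filter fun j => c j ≠ 0 with hS
      have hcS : c = ind S := eq_ind_filter c
      refine ⟨S, ?_, hcS.symm⟩
      rw [hT, Finset.mem_coe, Finset.mem_filter]
      refine ⟨Finset.mem_powersetCard_univ.mpr ?_, ⟨x, by rw [hx, hcS]⟩⟩
      rw [← hammingNorm_eq_card_filter, hwt]
    · rintro ⟨S, hS, rfl⟩
      rw [hT, Finset.mem_coe, Finset.mem_filter] at hS
      exact ⟨hS.2, by rw [hammingNorm_ind, Finset.mem_powersetCard_univ.mp hS.1]⟩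
  have hcount : numWeightTwo G = T.card := by
    rw [numWeightTwo, hset, Set.ncard_image_of_injective _ ind_injective,
      Set.ncard_coe_finset]
  -- first conjunct
  have h1 : ∑ S ∈ P2,
      (k - (G.submatrix id (fun j : {x : Fin n // x ∉ S} => (j : Fin n))).rank) = T.card := by
    rw [hT, Finset.card_filter]
    refine Finset.sum_congr rfl fun S hS => ?_
    exact key G hrank hmd (Finset.mem_powersetCard_univ.mp hS)
  -- rank bound
  have hle : ∀ S : Finset (Fin n),
      (G.submatrix id (fun j : {x : Fin n // x ∉ S} => (j : Fin n))).rank ≤ k := fun S => by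
    simpa using Matrix.rank_le_card_height (G.submatrix id (fun j : {x : Fin n // x ∉ S} => (j : Fin n)))
  -- unnormInfoFun as sum over P2
  have h2 : unnormInfoFun G (n - 2) = ∑ S ∈ P2,
      (G.submatrix id (fun j : {x : Fin n // x ∉ S} => (j : Fin n))).rank := by
    rw [unnormInfoFun]
    refine Finset.sum_nbij' (fun S => Sᶜ) (fun S => Sᶜ) ?_ ?_ ?_ ?_ ?_
    · intro S hS
      rw [Finset.mem_powersetCard_univ] at hS ⊢
      rw [Finset.card_compl, Fintype.card_fin, hS]
      omega
    · intro S hS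
      rw [Finset.mem_powersetCard_univ] at hS ⊢
      rw [Finset.card_compl, Fintype.card_fin, hS]
    · intro S _; exact compl_compl S
    · intro S _; exact compl_compl S
    · intro S hS
      have heq : (G.submatrix id (fun j : {x : Fin n // x ∈ S} => (j : Fin n)))
          = (G.submatrix id (fun j : {x : Fin n // x ∉ Sᶜ} => (j : Fin n))).submatrix id
            (Equiv.subtypeEquivRight (p := fun x : Fin n => x ∉ Sᶜ) (q := fun x : Fin n => x ∈ S)
              (fun x => by simp)).symm := by
        ext i j
        rfl
      rw [heq, rank_submatrix_equiv]
  -- second conjunct arithmetic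
  have hsum : ∑ S ∈ P2,
      (k - (G.submatrix id (fun j : {x : Fin n // x ∉ S} => (j : Fin n))).rank)
      + ∑ S ∈ P2, (G.submatrix id (fun j : {x : Fin n // x ∉ S} => (j : Fin n))).rank
      = P2.card * k := by
    rw [← Finset.sum_add_distrib]
    rw [Finset.sum_congr rfl (fun S _ => Nat.sub_add_cancel (hle S))]
    rw [Finset.sum_const, smul_eq_mul]
  have hcard : P2.card = Nat.choose n 2 := by
    rw [hP2, Finset.card_powersetCard, Finset.card_univ, Fintype.card_fin]
  constructor
  · rw [h1, hcount]
  · rw [hcard, Nat.mul_comm] at hsum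
    rw [h2, hcount, ← h1]
    omega
end

section
/- With the CSA density-evolution setup below, the composite map F = f_s ∘ f_b satisfies F(0) = 0 and its derivative at 0 equals F'(0) = (2c/k)·𝓑₂, where 𝓑₂ = Σ_{h=1}^{θ} Λ_h B₂^{(h)} is the expected number of weight-2 codewords of a randomly drawn component code. In particular F'(0) = 0 whenever every component code has minimum distance at least 3. (Derivative computation underlying the stability condition for CSA.) -/
open Finset

/-- The burst-node EXIT function of a CSA scheme with component generator matrices
`G h` (of size `k × n h`) drawn with probabilities `Λ h`. -/
noncomputable def burstExit {k θ : ℕ} (n : Fin θ → ℕ)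
    (G : ∀ h : Fin θ, Matrix (Fin k) (Fin (n h)) (ZMod 2)) (Λ : Fin θ → ℝ) (p : ℝ) : ℝ :=
  (1 / ∑ h, Λ h * (n h : ℝ)) * ∑ h, Λ h *
    ∑ t ∈ Finset.range (n h),
      p ^ t * (1 - p) ^ (n h - 1 - t) *
        (((n h : ℝ) - t) * (unnormInfoFun (G h) (n h - t) : ℝ)
          - ((t : ℝ) + 1) * (unnormInfoFun (G h) (n h - 1 - t) : ℝ))

/-- The slice-node EXIT function of CSA at expected channel load `c` and rate `R`. -/
noncomputable def sliceExit (c R q : ℝ) : ℝ := 1 - Real.exp (-(c / R) * q)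


section CSAHelpers
open Matrix
variable {k n : ℕ}

noncomputable def kerS (M : Matrix (Fin k) (Fin n) (ZMod 2)) (S : Finset (Fin n)) :
    Submodule (ZMod 2) (Fin k → ZMod 2) :=
  LinearMap.ker ((M.submatrix id (fun j : {x : Fin n // x ∈ S} => (j : Fin n)))ᵀ.mulVecLin)

lemma mem_kerS {M : Matrix (Fin k) (Fin n) (ZMod 2)} {S : Finset (Fin n)}
    {x : Fin k → ZMod 2} : x ∈ kerS M S ↔ ∀ j ∈ S, Matrix.vecMul x M j = 0 := by
  simp only [kerS, LinearMap.mem_ker, mulVecLin_apply]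
  constructor
  · intro h j hj
    have := congr_fun h ⟨j, hj⟩
    simpa [Matrix.mulVec, Matrix.vecMul, dotProduct, mul_comm] using this
  · intro h
    funext j
    have := h j j.2
    simpa [Matrix.mulVec, Matrix.vecMul, dotProduct, mul_comm] using this

lemma rank_add_finrank_kerS (M : Matrix (Fin k) (Fin n) (ZMod 2)) (S : Finset (Fin n)) :
    (M.submatrix id (fun j : {x : Fin n // x ∈ S} => (j : Fin n))).rank
      + Module.finrank (ZMod 2) (kerS M S) = k := by
  have h := LinearMap.finrank_range_add_finrank_ker
    ((M.submatrix id (fun j : {x : Fin n // x ∈ S} => (j : Fin n)))ᵀ.mulVecLin)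
  rw [← Matrix.rank_transpose (M.submatrix id (fun j : {x : Fin n // x ∈ S} => (j : Fin n)))]
  rw [Matrix.rank]
  rw [kerS] at *
  simpa using h

lemma vecMul_injective {M : Matrix (Fin k) (Fin n) (ZMod 2)} (hrank : M.rank = k)
    {x : Fin k → ZMod 2} (hx : Matrix.vecMul x M = 0) : x = 0 := by
  have h := LinearMap.finrank_range_add_finrank_ker (Mᵀ.mulVecLin)
  rw [show Module.finrank (ZMod 2) (LinearMap.range Mᵀ.mulVecLin) = Mᵀ.rank from rfl,
    Matrix.rank_transpose, hrank] at h
  have hker : Module.finrank (ZMod 2) (LinearMap.ker Mᵀ.mulVecLin) = 0 := by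
    have : Module.finrank (ZMod 2) (Fin k → ZMod 2) = k := by simp
    omega
  have hbot : LinearMap.ker Mᵀ.mulVecLin = ⊥ := Submodule.finrank_eq_zero.mp hker
  have hxk : x ∈ LinearMap.ker Mᵀ.mulVecLin := by
    simp [LinearMap.mem_ker, Matrix.mulVec_transpose, hx]
  rw [hbot] at hxk
  simpa using hxk

lemma rank_eq_of_trivial {M : Matrix (Fin k) (Fin n) (ZMod 2)} {S : Finset (Fin n)}
    (h : ∀ x : Fin k → ZMod 2, (∀ j ∈ S, Matrix.vecMul x M j = 0) → x = 0) :
    (M.submatrix id (fun j : {x : Fin n // x ∈ S} => (j : Fin n))).rank = k := by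
  have h1 := rank_add_finrank_kerS M S
  have h2 : kerS M S = ⊥ := by
    rw [Submodule.eq_bot_iff]
    exact fun x hx => h x (mem_kerS.mp hx)
  rw [h2] at h1
  simpa using h1

lemma hammingNorm_le_of_vanish {c : Fin n → ZMod 2} {S : Finset (Fin n)}
    (h : ∀ j ∈ S, c j = 0) : hammingNorm c ≤ n - S.card := by
  have h1 : ({i | c i ≠ 0} : Finset (Fin n)) ⊆ univ \ S := by
    intro j hj
    simp only [Finset.mem_filter] at hj
    simp only [Finset.mem_sdiff, Finset.mem_univ, true_and]
    intro hjS
    have hc : c j ≠ 0 := by simpa using hj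
    exact hc (h j hjS)
  calc hammingNorm c ≤ (univ \ S).card := Finset.card_le_card h1
    _ = n - S.card := by rw [Finset.card_sdiff_of_subset (Finset.subset_univ S)]; simp

/-- e_n = k -/
lemma unnorm_top {M : Matrix (Fin k) (Fin n) (ZMod 2)} (hrank : M.rank = k) :
    unnormInfoFun M n = k := by
  have huniv := Finset.powersetCard_self (Finset.univ : Finset (Fin n))
  simp only [Finset.card_univ, Fintype.card_fin] at huniv
  rw [unnormInfoFun, huniv, Finset.sum_singleton]
  apply rank_eq_of_trivial
  intro x hx
  apply vecMul_injective hrank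
  funext j
  exact hx j (Finset.mem_univ j)

/-- e_{n-1} = n * k -/
lemma unnorm_sub_one {M : Matrix (Fin k) (Fin n) (ZMod 2)} (hrank : M.rank = k)
    (hmd : ∀ x : Fin k → ZMod 2, hammingNorm (Matrix.vecMul x M) ≠ 1) (hn : 1 ≤ n) :
    unnormInfoFun M (n - 1) = n * k := by
  rw [unnormInfoFun]
  rw [Finset.sum_congr rfl (fun S hS => ?_), Finset.sum_const, Finset.card_powersetCard]
  · simp only [smul_eq_mul, Finset.card_univ, Fintype.card_fin]
    congr 1
    have h1 : n.choose (n - 1) = n.choose 1 := by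
      rw [← Nat.choose_symm (by omega : n - 1 ≤ n)]
      congr 1
      omega
    rw [h1, Nat.choose_one_right]
  · rw [Finset.mem_powersetCard_univ] at hS
    apply rank_eq_of_trivial
    intro x hx
    apply vecMul_injective hrank
    rw [← hammingNorm_eq_zero]
    have h1 := hammingNorm_le_of_vanish hx
    have h2 := hmd x
    omega


lemma eq_indicator {c : Fin n → ZMod 2} {S : Finset (Fin n)} (hS : S.card = n - 2) (hn : 2 ≤ n)
    (hvan : ∀ j ∈ S, c j = 0) (h2 : hammingNorm c = 2) :
    c = fun j => if j ∈ S then 0 else 1 := by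
  classical
  have hsub : ({i | c i ≠ 0} : Finset (Fin n)) ⊆ univ \ S := by
    intro j hj
    simp only [Finset.mem_filter, Finset.mem_univ, true_and] at hj
    simp only [Finset.mem_sdiff, Finset.mem_univ, true_and]
    intro hjS
    exact hj (hvan j hjS)
  have hcard2 : ({i | c i ≠ 0} : Finset (Fin n)).card = 2 := h2
  have hcardC : (univ \ S).card = 2 := by
    rw [Finset.card_sdiff_of_subset (Finset.subset_univ S)]
    simp only [Finset.card_univ, Fintype.card_fin]
    omega
  have heq : ({i | c i ≠ 0} : Finset (Fin n)) = univ \ S :=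
    Finset.eq_of_subset_of_card_le hsub (by omega)
  funext j
  by_cases hj : j ∈ S
  · simp [hj, hvan j hj]
  · have hjm : j ∈ ({i | c i ≠ 0} : Finset (Fin n)) := by
      rw [heq]; simp [hj]
    have hne : c j ≠ 0 := by simpa using hjm
    rcases (by decide : ∀ a : ZMod 2, a = 0 ∨ a = 1) (c j) with h | h
    · exact absurd h hne
    · simp [hj, h]

lemma filter_zero_eq {c : Fin n → ZMod 2} {S : Finset (Fin n)} (hS : S.card = n - 2)
    (hvan : ∀ j ∈ S, c j = 0) (h2 : hammingNorm c = 2) :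
    Finset.univ.filter (fun j => c j = 0) = S := by
  classical
  have hsub : S ⊆ Finset.univ.filter (fun j => c j = 0) := by
    intro j hj
    simp [hvan j hj]
  have hpart : (Finset.univ.filter (fun j => c j = 0)).card
      + ({i | c i ≠ 0} : Finset (Fin n)).card = n := by
    have := Finset.card_filter_add_card_filter_not
      (s := (Finset.univ : Finset (Fin n))) (p := fun j => c j = 0)
    simpa using this
  have hcard2 : ({i | c i ≠ 0} : Finset (Fin n)).card = 2 := h2
  exact (Finset.eq_of_subset_of_card_le hsub (by omega)).symm

lemma fiber_card {M : Matrix (Fin k) (Fin n) (ZMod 2)} (hrank : M.rank = k)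
    (hmd : ∀ x : Fin k → ZMod 2, hammingNorm (Matrix.vecMul x M) ≠ 1) (hn : 2 ≤ n)
    {S : Finset (Fin n)} (hS : S.card = n - 2) (F : Finset (Fin n → ZMod 2))
    (hF : ∀ c, c ∈ F ↔ ((∃ x, Matrix.vecMul x M = c) ∧ hammingNorm c = 2) ∧
      Finset.univ.filter (fun j => c j = 0) = S) :
    F.card = Module.finrank (ZMod 2) (kerS M S) := by
  classical
  -- every member of F is the indicator of Sᶜ
  have hind : ∀ c ∈ F, c = fun j => if j ∈ S then 0 else 1 := by
    intro c hc
    rw [hF] at hc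
    obtain ⟨⟨hcw, h2⟩, hfib⟩ := hc
    refine eq_indicator hS hn ?_ h2
    intro j hj
    have : j ∈ Finset.univ.filter (fun j => c j = 0) := hfib ▸ hj
    simpa using this
  -- every nonzero kernel element maps to a member of F
  have hker_mem : ∀ x ∈ kerS M S, x ≠ 0 → Matrix.vecMul x M ∈ F := by
    intro x hx hx0
    have hvan : ∀ j ∈ S, Matrix.vecMul x M j = 0 := mem_kerS.mp hx
    have hle : hammingNorm (Matrix.vecMul x M) ≤ n - S.card := hammingNorm_le_of_vanish hvan
    have hne : Matrix.vecMul x M ≠ 0 := fun h => hx0 (vecMul_injective hrank h)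
    have h0 : hammingNorm (Matrix.vecMul x M) ≠ 0 := by
      rwa [Ne, hammingNorm_eq_zero]
    have h2 : hammingNorm (Matrix.vecMul x M) = 2 := by
      have := hmd x; omega
    rw [hF]
    exact ⟨⟨⟨x, rfl⟩, h2⟩, filter_zero_eq hS hvan h2⟩
  by_cases hne : F.Nonempty
  · obtain ⟨c, hc⟩ := hne
    have hcind := hind c hc
    have hFs : F = {c} := by
      rw [Finset.eq_singleton_iff_unique_mem]
      exact ⟨hc, fun c' hc' => (hind c' hc').trans hcind.symm⟩
    obtain ⟨⟨⟨x, hxc⟩, h2⟩, hfib⟩ := (hF c).mp hc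
    have hx0 : x ≠ 0 := by
      intro h
      rw [h] at hxc
      simp only [Matrix.zero_vecMul] at hxc
      rw [← hxc] at h2
      simp [hammingNorm_zero] at h2
    have hxker : x ∈ kerS M S := by
      rw [mem_kerS]
      intro j hj
      rw [hxc]
      have : j ∈ Finset.univ.filter (fun j => c j = 0) := hfib ▸ hj
      simpa using this
    have hker_eq : kerS M S = Submodule.span (ZMod 2) {x} := by
      apply le_antisymm
      · intro y hy
        by_cases hy0 : y = 0
        · simp [hy0]
        · have h1 : Matrix.vecMul y M ∈ F := hker_mem y hy hy0
          have h2' : Matrix.vecMul y M = c := by rw [hFs] at h1; simpa using h1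
          have h3 : Matrix.vecMul (y - x) M = 0 := by
            rw [Matrix.sub_vecMul, h2', hxc, sub_self]
          have h4 : y = x := by
            have := vecMul_injective hrank h3
            rwa [sub_eq_zero] at this
          rw [h4]
          exact Submodule.mem_span_singleton_self x
      · rw [Submodule.span_le]
        simpa using hxker
    rw [hFs, hker_eq, finrank_span_singleton hx0]
    simp
  · rw [Finset.not_nonempty_iff_eq_empty] at hne
    have hker_bot : kerS M S = ⊥ := by
      rw [Submodule.eq_bot_iff]
      intro x hx
      by_contra hx0
      have := hker_mem x hx hx0
      rw [hne] at this
      simp at this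
    rw [hne, hker_bot]
    simp

lemma unnorm_sub_two {M : Matrix (Fin k) (Fin n) (ZMod 2)} (hrank : M.rank = k)
    (hmd : ∀ x : Fin k → ZMod 2, hammingNorm (Matrix.vecMul x M) ≠ 1) (hn : 2 ≤ n) :
    unnormInfoFun M (n - 2) + numWeightTwo M = n.choose 2 * k := by
  classical
  have hsum : unnormInfoFun M (n-2)
      + ∑ S ∈ Finset.powersetCard (n-2) (Finset.univ : Finset (Fin n)),
          Module.finrank (ZMod 2) (kerS M S) = n.choose 2 * k := by
    rw [unnormInfoFun, ← Finset.sum_add_distrib]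
    rw [Finset.sum_congr rfl (fun S _ => rank_add_finrank_kerS M S), Finset.sum_const,
      smul_eq_mul, Finset.card_powersetCard]
    congr 1
    simp only [Finset.card_univ, Fintype.card_fin]
    exact Nat.choose_symm hn
  suffices hB : ∑ S ∈ Finset.powersetCard (n-2) (Finset.univ : Finset (Fin n)),
      Module.finrank (ZMod 2) (kerS M S) = numWeightTwo M by omega
  set W : Finset (Fin n → ZMod 2) :=
    Finset.univ.filter (fun c => (∃ x : Fin k → ZMod 2, Matrix.vecMul x M = c) ∧
      hammingNorm c = 2) with hW
  have hWcard : numWeightTwo M = W.card := by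
    rw [numWeightTwo, ← Set.ncard_coe_finset]
    congr 1
    ext c
    simp [hW]
  have hmap : ∀ c ∈ W, Finset.univ.filter (fun j => c j = 0)
      ∈ Finset.powersetCard (n-2) (Finset.univ : Finset (Fin n)) := by
    intro c hc
    rw [Finset.mem_powersetCard_univ]
    simp only [hW, Finset.mem_filter] at hc
    have hpart : (Finset.univ.filter (fun j => c j = 0)).card
        + ({i | c i ≠ 0} : Finset (Fin n)).card = n := by
      have := Finset.card_filter_add_card_filter_not
        (s := (Finset.univ : Finset (Fin n))) (p := fun j => c j = 0)
      simpa using this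
    have h2 : ({i | c i ≠ 0} : Finset (Fin n)).card = 2 := hc.2.2
    omega
  rw [hWcard, Finset.card_eq_sum_card_fiberwise hmap]
  apply Finset.sum_congr rfl
  intro S hS
  rw [Finset.mem_powersetCard_univ] at hS
  symm
  apply fiber_card hrank hmd hn hS
  intro c
  simp only [hW, Finset.mem_filter, Finset.mem_univ, true_and]


end CSAHelpers

/-- Derivative computation underlying the CSA stability condition: the composite
density-evolution map `F = f_s ∘ f_b` satisfies `F 0 = 0` and
`F'(0) = (2c/k) 𝓑₂`, where `𝓑₂ = ∑ h Λ h B₂^{(h)}` is the expected number of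
weight-2 codewords of a randomly drawn component code. -/
theorem csa_de_map_derivAt_zero (k θ : ℕ) (hk : 1 ≤ k) (hθ : 1 ≤ θ)
    (n : Fin θ → ℕ) (hn : ∀ h, 2 ≤ n h)
    (G : ∀ h : Fin θ, Matrix (Fin k) (Fin (n h)) (ZMod 2))
    (hrank : ∀ h, (G h).rank = k)
    (hmd : ∀ h, ∀ x : Fin k → ZMod 2, hammingNorm (Matrix.vecMul x (G h)) ≠ 1)
    (Λ : Fin θ → ℝ) (hΛ : ∀ h, 0 ≤ Λ h) (hΛ1 : ∑ h, Λ h = 1)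
    (c : ℝ) (hc : 0 < c)
    (R : ℝ) (hR : R = (k : ℝ) / ∑ h, Λ h * (n h : ℝ)) :
    (sliceExit c R ∘ burstExit n G Λ) 0 = 0 ∧
    HasDerivAt (sliceExit c R ∘ burstExit n G Λ)
      ((2 * c / k) * ∑ h, Λ h * (numWeightTwo (G h) : ℝ)) 0 := by
  set nb : ℝ := ∑ h, Λ h * (n h : ℝ) with hnb
  have hnb2 : (2 : ℝ) ≤ nb := by
    calc (2:ℝ) = ∑ h, Λ h * 2 := by rw [← Finset.sum_mul, hΛ1, one_mul]
    _ ≤ nb := by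
        apply Finset.sum_le_sum
        intro h _
        have : (2:ℝ) ≤ (n h : ℝ) := by exact_mod_cast hn h
        nlinarith [hΛ h]
  have hnb0 : nb ≠ 0 := by linarith
  have hk0 : (k : ℝ) ≠ 0 := by positivity
  -- the coefficient function
  set A : Fin θ → ℕ → ℝ := fun h t =>
    ((n h : ℝ) - t) * (unnormInfoFun (G h) (n h - t) : ℝ)
      - ((t : ℝ) + 1) * (unnormInfoFun (G h) (n h - 1 - t) : ℝ) with hA
  have hA0 : ∀ h, A h 0 = 0 := by
    intro h
    simp only [hA]
    rw [Nat.sub_zero, Nat.sub_zero, unnorm_top (hrank h),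
      unnorm_sub_one (hrank h) (hmd h) (by have := hn h; omega)]
    push_cast
    ring
  have hA1 : ∀ h, A h 1 = 2 * (numWeightTwo (G h) : ℝ) := by
    intro h
    have h2c : 2 * (n h).choose 2 = n h * (n h - 1) := by
      have hcr := Nat.choose_two_right (n h)
      have heven : 2 ∣ n h * (n h - 1) := by
        have := Nat.even_mul_succ_self (n h - 1)
        have h1 : (n h - 1) * (n h - 1 + 1) = n h * (n h - 1) := by
          have := hn h; rw [Nat.sub_add_cancel (by omega)]; ring
        rw [h1] at this
        exact this.two_dvd
      omega
    have he2 := unnorm_sub_two (hrank h) (hmd h) (hn h)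
    have he1 := unnorm_sub_one (hrank h) (hmd h) (by have := hn h; omega)
    simp only [hA]
    have hidx : n h - 1 - 1 = n h - 2 := by omega
    rw [hidx, he1]
    have hcast2 : (unnormInfoFun (G h) (n h - 2) : ℝ)
        = ((n h).choose 2 : ℝ) * k - (numWeightTwo (G h) : ℝ) := by
      have : (unnormInfoFun (G h) (n h - 2) : ℝ) + (numWeightTwo (G h) : ℝ)
          = ((n h).choose 2 : ℝ) * (k : ℝ) := by exact_mod_cast he2
      linarith
    rw [hcast2]
    have hcc : 2 * ((n h).choose 2 : ℝ) = (n h : ℝ) * ((n h : ℝ) - 1) := by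
      have : ((2 * (n h).choose 2 : ℕ) : ℝ) = ((n h * (n h - 1) : ℕ) : ℝ) := by
        exact_mod_cast congrArg (Nat.cast (R := ℝ)) h2c
      push_cast [Nat.cast_sub (show 1 ≤ n h by have := hn h; omega)] at this
      linarith
    push_cast
    nlinarith [hcc]
  -- derivative of each term
  have hterm : ∀ (m s : ℕ) (a : ℝ), HasDerivAt (fun p : ℝ => p ^ m * (1 - p) ^ s * a)
      (((m : ℝ) * 0 ^ (m - 1) * (1 - 0) ^ s + 0 ^ m * ((s : ℝ) * (1 - 0) ^ (s - 1) * (-1))) * a)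
      0 := by
    intro m s a
    have h1 : HasDerivAt (fun p : ℝ => p ^ m) ((m : ℝ) * 0 ^ (m - 1)) 0 := hasDerivAt_pow m 0
    have h2 : HasDerivAt (fun p : ℝ => (1 - p) ^ s) ((s : ℝ) * (1 - 0) ^ (s - 1) * (-1)) 0 := by
      have ha : HasDerivAt (fun p : ℝ => 1 - p) (-1) 0 := by
        simpa using (hasDerivAt_id' (0:ℝ)).const_sub (1:ℝ)
      have := (hasDerivAt_pow s ((1:ℝ) - 0)).comp 0 ha
      simpa [Function.comp_def] using this
    have h3 := (h1.mul h2).mul_const a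
    exact h3
  -- derivative of burstExit
  have hburst : HasDerivAt (burstExit n G Λ)
      ((1 / nb) * ∑ h, Λ h * (2 * (numWeightTwo (G h) : ℝ))) 0 := by
    have hfun : burstExit n G Λ = fun p => (1 / nb) * ∑ h, Λ h *
        ∑ t ∈ Finset.range (n h), p ^ t * (1 - p) ^ (n h - 1 - t) * A h t := rfl
    rw [hfun]
    have hinner : ∀ h : Fin θ, HasDerivAt
        (fun p : ℝ => ∑ t ∈ Finset.range (n h), p ^ t * (1 - p) ^ (n h - 1 - t) * A h t)
        (2 * (numWeightTwo (G h) : ℝ)) 0 := by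
      intro h
      have hs := HasDerivAt.fun_sum (fun t (_ : t ∈ Finset.range (n h)) => hterm t (n h - 1 - t) (A h t))
      refine hs.congr_deriv ?_
      symm
      rw [Finset.sum_eq_single_of_mem 1 (Finset.mem_range.mpr (by have := hn h; omega))]
      · rw [← hA1 h]
        norm_num
      · intro b _ hb1
        rcases Nat.eq_zero_or_pos b with hb0 | hbpos
        · subst hb0
          rw [hA0 h]
          ring
        · have hb2 : 2 ≤ b := by omega
          rw [zero_pow (by omega : b ≠ 0), zero_pow (by omega : b - 1 ≠ 0)]
          ring
    have hsum := HasDerivAt.fun_sum (fun h (_ : h ∈ (Finset.univ : Finset (Fin θ))) =>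
      (hinner h).const_mul (Λ h))
    exact hsum.const_mul (1 / nb)
  -- value at zero
  have hb0 : burstExit n G Λ 0 = 0 := by
    have hfun : burstExit n G Λ 0 = (1 / nb) * ∑ h, Λ h *
        ∑ t ∈ Finset.range (n h), (0:ℝ) ^ t * (1 - 0) ^ (n h - 1 - t) * A h t := rfl
    rw [hfun]
    have hz : ∀ h : Fin θ,
        ∑ t ∈ Finset.range (n h), (0:ℝ) ^ t * (1 - 0) ^ (n h - 1 - t) * A h t = 0 := by
      intro h
      rw [Finset.sum_eq_single_of_mem 0 (Finset.mem_range.mpr (by have := hn h; omega))]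
      · rw [hA0 h]; ring
      · intro b _ hb0
        rw [zero_pow hb0]; ring
    simp only [hz, mul_zero, Finset.sum_const_zero]
  have hR0 : R ≠ 0 := by
    rw [hR]
    positivity
  -- derivative of sliceExit at 0
  have hslice : HasDerivAt (sliceExit c R) (c / R) 0 := by
    have hexp : HasDerivAt (fun q : ℝ => Real.exp (-(c / R) * q))
        (Real.exp (-(c / R) * 0) * (-(c / R))) 0 := by
      have hl : HasDerivAt (fun q : ℝ => -(c / R) * q) (-(c / R)) 0 := by
        simpa using (hasDerivAt_id (0:ℝ)).const_mul (-(c / R))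
      exact (Real.hasDerivAt_exp _).comp 0 hl
    have := (hasDerivAt_const (0:ℝ) (1:ℝ)).sub hexp
    refine this.congr_deriv ?_
    simp
  constructor
  · simp [Function.comp, hb0, sliceExit]
  · have hslice' : HasDerivAt (sliceExit c R) (c / R) (burstExit n G Λ 0) := by rwa [hb0]
    have hcomp := hslice'.comp 0 hburst
    refine hcomp.congr_deriv ?_
    rw [hR]
    have hsum2 : ∑ h, Λ h * (2 * (numWeightTwo (G h) : ℝ))
        = 2 * ∑ h, Λ h * (numWeightTwo (G h) : ℝ) := by
      rw [Finset.mul_sum]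
      exact Finset.sum_congr rfl (fun h _ => by ring)
    rw [hsum2]
    field_simp
end

section
/- Let k ≥ 1 be an integer and let a be a real number with 0 < a ≤ 1/k. Then the map F_a(p) = 1 - exp(-a·(1 - (1-p)^k)) satisfies F_a(p) < p for every p ∈ (0,1]. -/
/-- For an integer `k ≥ 1` and `0 < a ≤ 1/k`, the SPC density-evolution map
`F_a(p) = 1 - exp (-a (1 - (1-p)^k))` lies strictly below the diagonal on `(0,1]`. -/
theorem spc_de_map_lt_id (k : ℕ) (hk : 1 ≤ k) (a : ℝ) (ha0 : 0 < a)
    (ha : a ≤ 1 / (k : ℝ)) (p : ℝ) (hp : p ∈ Set.Ioc (0 : ℝ) 1) :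
    1 - Real.exp (-a * (1 - (1 - p) ^ k)) < p := by
  obtain ⟨hp0, hp1⟩ := hp
  have hkpos : (0:ℝ) < k := by exact_mod_cast hk
  set t : ℝ := a * (1 - (1 - p) ^ k) with ht
  -- (1-p)^k < 1, so t > 0
  have h1p0 : 0 ≤ 1 - p := by linarith
  have hpow1 : (1 - p) ^ k < 1 := by
    calc (1 - p) ^ k ≤ (1 - p) ^ 1 := pow_le_pow_of_le_one h1p0 (by linarith) hk
    _ = 1 - p := pow_one _
    _ < 1 := by linarith
  have ht0 : 0 < t := mul_pos ha0 (by linarith)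
  -- Bernoulli: 1 - k*p ≤ (1-p)^k
  have hbern : 1 - (k:ℝ) * p ≤ (1 - p) ^ k := by
    have := one_add_mul_le_pow (a := -p) (by linarith) k
    calc 1 - (k:ℝ) * p = 1 + (k:ℝ) * (-p) := by ring
    _ ≤ (1 + -p) ^ k := this
    _ = (1 - p) ^ k := by ring_nf
  have htp : t ≤ p := by
    have h1 : 1 - (1 - p) ^ k ≤ (k:ℝ) * p := by linarith
    calc t ≤ (1 / (k:ℝ)) * (1 - (1 - p) ^ k) := by
          apply mul_le_mul_of_nonneg_right ha (by linarith)
    _ ≤ (1 / (k:ℝ)) * ((k:ℝ) * p) := by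
          apply mul_le_mul_of_nonneg_left h1 (by positivity)
    _ = p := by field_simp
  have hexp : 1 - t < Real.exp (-t) := by
    have := Real.add_one_lt_exp (x := -t) (by linarith)
    linarith
  have : -a * (1 - (1 - p) ^ k) = -t := by ring
  rw [this]
  linarith
end

section
/- Let k ≥ 1 be an integer and let c be a real number with 0 < c ≤ 1/(k+1); set a = c·(k+1)/k. Define the sequence p₀ = 1 - exp(-a) and p_ℓ = F_a(p_{ℓ-1}) for ℓ ≥ 1, where F_a(p) = 1 - exp(-a·(1 - (1-p)^k)). Then p_ℓ → 0 as ℓ → ∞. (Hence the CSA scheme in which all users employ the (k+1,k) single parity-check code achieves capacity G* = 1/(k+1): density evolution converges to zero for every expected channel load c ≤ 1/(k+1).) -/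
/-- The CSA scheme in which all users employ the `(k+1,k)` single parity-check code
achieves capacity `1/(k+1)`: for expected channel load `0 < c ≤ 1/(k+1)` and
`a = c (k+1)/k`, the density-evolution recursion `p₀ = 1 - exp (-a)`,
`p_ℓ = 1 - exp (-a (1 - (1 - p_{ℓ-1})^k))` converges to `0`. -/
theorem spc_de_converges_to_zero (k : ℕ) (hk : 1 ≤ k) (c : ℝ) (hc0 : 0 < c)
    (hc : c ≤ 1 / ((k : ℝ) + 1)) (a : ℝ) (ha : a = c * ((k : ℝ) + 1) / k)
    (p : ℕ → ℝ) (hp0 : p 0 = 1 - Real.exp (-a))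
    (hrec : ∀ ℓ : ℕ, p (ℓ + 1) = 1 - Real.exp (-a * (1 - (1 - p ℓ) ^ k))) :
    Filter.Tendsto p Filter.atTop (nhds 0) := by
  have hk1 : (1:ℝ) ≤ (k:ℝ) := by exact_mod_cast hk
  have hkpos : (0:ℝ) < (k:ℝ) := by linarith
  have ha0 : 0 < a := by rw [ha]; positivity
  have hak : a * k ≤ 1 := by
    have h1 : a * k = c * ((k:ℝ) + 1) := by rw [ha]; field_simp
    have h2 : c * ((k:ℝ) + 1) ≤ 1 := by
      rw [le_div_iff₀ (by positivity)] at hc; linarith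
    linarith
  -- bounds
  have hbound : ∀ ℓ, 0 ≤ p ℓ ∧ p ℓ < 1 := by
    intro ℓ
    induction ℓ with
    | zero =>
      rw [hp0]
      constructor
      · have : Real.exp (-a) ≤ 1 := by
          rw [Real.exp_le_one_iff]; linarith
        linarith
      · have := Real.exp_pos (-a); linarith
    | succ n ih =>
      obtain ⟨h0, h1⟩ := ih
      rw [hrec n]
      have hpow : (1 - p n) ^ k ≤ 1 := pow_le_one₀ (by linarith) (by linarith)
      constructor
      · have : Real.exp (-a * (1 - (1 - p n) ^ k)) ≤ 1 := by
          rw [Real.exp_le_one_iff]; nlinarith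
        linarith
      · have := Real.exp_pos (-a * (1 - (1 - p n) ^ k)); linarith
  -- key step bound : p (ℓ+1) ≤ a * k * p ℓ ≤ p ℓ
  have hstep : ∀ ℓ, p (ℓ + 1) ≤ p ℓ := by
    intro ℓ
    obtain ⟨h0, h1⟩ := hbound ℓ
    set q := p ℓ with hq
    have hbern : 1 - (k:ℝ) * q ≤ (1 - q) ^ k := by
      have := one_add_mul_le_pow (show (-2:ℝ) ≤ -q by linarith) k
      simp only [← sub_eq_add_neg] at this; linarith
    have hx : a * (1 - (1 - q) ^ k) ≤ a * ((k:ℝ) * q) := by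
      apply mul_le_mul_of_nonneg_left _ (le_of_lt ha0)
      linarith
    have hexp : 1 - Real.exp (-(a * (1 - (1 - q) ^ k))) ≤ a * (1 - (1 - q) ^ k) := by
      have := Real.add_one_le_exp (-(a * (1 - (1 - q) ^ k)))
      linarith
    rw [hrec ℓ]
    have : -a * (1 - (1 - q) ^ k) = -(a * (1 - (1 - q) ^ k)) := by ring
    rw [this]
    nlinarith
  have hanti : Antitone p := antitone_nat_of_succ_le hstep
  have hbdd : BddBelow (Set.range p) := ⟨0, by rintro x ⟨n, rfl⟩; exact (hbound n).1⟩
  have hT : Filter.Tendsto p Filter.atTop (nhds (⨅ n, p n)) :=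
    tendsto_atTop_ciInf hanti hbdd
  set L := ⨅ n, p n with hL
  have hL0 : 0 ≤ L := le_ciInf fun n => (hbound n).1
  have hLp0 : L ≤ p 0 := ciInf_le hbdd 0
  -- fixed point
  have hcont : Continuous (fun x : ℝ => 1 - Real.exp (-a * (1 - (1 - x) ^ k))) := by
    continuity
  have hfix : 1 - Real.exp (-a * (1 - (1 - L) ^ k)) = L := by
    have h1 : Filter.Tendsto (fun ℓ => p (ℓ + 1)) Filter.atTop (nhds L) :=
      hT.comp (Filter.tendsto_add_atTop_nat 1)
    have h2 : Filter.Tendsto (fun ℓ => 1 - Real.exp (-a * (1 - (1 - p ℓ) ^ k)))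
        Filter.atTop (nhds (1 - Real.exp (-a * (1 - (1 - L) ^ k)))) :=
      (hcont.tendsto L).comp hT
    have h3 : (fun ℓ => p (ℓ + 1)) = fun ℓ => 1 - Real.exp (-a * (1 - (1 - p ℓ) ^ k)) := by
      funext ℓ; exact hrec ℓ
    rw [h3] at h1
    exact tendsto_nhds_unique h2 h1
  have hLzero : L = 0 := by
    by_contra hne
    have hLpos : 0 < L := lt_of_le_of_ne hL0 (Ne.symm hne)
    have hL1 : L < 1 := lt_of_le_of_lt hLp0 (hbound 0).2
    have hpow : (1 - L) ^ k < 1 :=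
      pow_lt_one₀ (by linarith) (by linarith) (by omega)
    have hxpos : 0 < a * (1 - (1 - L) ^ k) := by
      apply mul_pos ha0; linarith
    have hlt : 1 - Real.exp (-(a * (1 - (1 - L) ^ k))) < a * (1 - (1 - L) ^ k) := by
      have := Real.add_one_lt_exp (show -(a * (1 - (1 - L) ^ k)) ≠ 0 by linarith)
      linarith
    have hbern : 1 - (k:ℝ) * L ≤ (1 - L) ^ k := by
      have := one_add_mul_le_pow (show (-2:ℝ) ≤ -L by linarith) k
      simp only [← sub_eq_add_neg] at this; linarith
    have hx : a * (1 - (1 - L) ^ k) ≤ a * ((k:ℝ) * L) := by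
      apply mul_le_mul_of_nonneg_left _ (le_of_lt ha0); linarith
    have : 1 - Real.exp (-a * (1 - (1 - L) ^ k)) < L := by
      have heq : -a * (1 - (1 - L) ^ k) = -(a * (1 - (1 - L) ^ k)) := by ring
      rw [heq]
      nlinarith
    linarith [hfix]
  rw [hLzero] at hT
  exact hT
end

section
/- Let k ≥ 1 be an integer and let c be a real number with c > 1/(k+1); set a = c·(k+1)/k (so a·k > 1). Define p₀ = 1 - exp(-a) and p_ℓ = F_a(p_{ℓ-1}) for ℓ ≥ 1, where F_a(p) = 1 - exp(-a·(1 - (1-p)^k)). Then there exists ε > 0 such that p_ℓ ≥ ε for all ℓ ≥ 0; in particular the sequence (p_ℓ) does not converge to 0. (Converse direction showing the SPC-based CSA scheme cannot operate above load 1/(k+1).) -/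
/-- Geometric sum lower bound: `k * t^(k-1) ≤ ∑_{i<k} t^i` for `0 ≤ t ≤ 1`. -/
lemma spc_aux_geom_sum_lb (k : ℕ) (t : ℝ) (ht0 : 0 ≤ t) (ht1 : t ≤ 1) :
    (k : ℝ) * t ^ (k - 1) ≤ ∑ i ∈ Finset.range k, t ^ i := by
  have h : ∀ i ∈ Finset.range k, t ^ (k - 1) ≤ t ^ i := by
    intro i hi
    exact pow_le_pow_of_le_one ht0 ht1 (Nat.le_sub_one_of_lt (Finset.mem_range.mp hi))
  calc (k : ℝ) * t ^ (k - 1) = ∑ _i ∈ Finset.range k, t ^ (k - 1) := by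
        rw [Finset.sum_const, Finset.card_range, nsmul_eq_mul]
    _ ≤ ∑ i ∈ Finset.range k, t ^ i := Finset.sum_le_sum h

/-- Key pointwise bound: if `0 < p ≤ δ` where `(1-δ)^k ⋅ a k ≥ 1`, then `F_a(p) ≥ p`. -/
lemma spc_aux_F_ge (k : ℕ) (hk : 1 ≤ k) (a : ℝ) (ha0 : 0 < a) (p : ℝ)
    (hp0 : 0 < p) (hp1 : p < 1) (hak : 1 ≤ a * k * (1 - p) ^ k) :
    p ≤ 1 - Real.exp (-a * (1 - (1 - p) ^ k)) := by
  set t : ℝ := 1 - p with htdef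
  have ht0 : 0 < t := by simp [htdef]; linarith
  have ht1 : t < 1 := by simp [htdef]; linarith
  -- suffices exp(-a(1-t^k)) ≤ t
  have key : Real.exp (-a * (1 - t ^ k)) ≤ t := by
    rw [← Real.le_log_iff_exp_le ht0]
    -- log t ≥ 1 - 1/t
    have hlog : 1 - 1 / t ≤ Real.log t := by
      have h := Real.log_le_sub_one_of_pos (x := 1 / t) (by positivity)
      rw [Real.log_div one_ne_zero (ne_of_gt ht0), Real.log_one] at h
      have : 0 - Real.log t ≤ 1 / t - 1 := h
      linarith
    -- a (1 - t^k) ≥ (1 - t)/t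
    have hgeom : (1 : ℝ) - t ^ k = (1 - t) * ∑ i ∈ Finset.range k, t ^ i := by
      have := geom_sum_mul t k
      have h2 : (∑ i ∈ Finset.range k, t ^ i) * (t - 1) = t ^ k - 1 := this
      nlinarith [h2]
    have hsum : (k : ℝ) * t ^ (k - 1) ≤ ∑ i ∈ Finset.range k, t ^ i :=
      spc_aux_geom_sum_lb k t (le_of_lt ht0) (le_of_lt ht1)
    have hpow : t ^ (k - 1) * t = t ^ k := by
      rw [← pow_succ, Nat.sub_add_cancel hk]
    have hmain : (1 - t) / t ≤ a * (1 - t ^ k) := by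
      rw [div_le_iff₀ ht0]
      have h1 : a * (1 - t ^ k) * t = a * (1 - t) * ((∑ i ∈ Finset.range k, t ^ i) * t) := by
        rw [hgeom]; ring
      rw [h1]
      have h2 : (k : ℝ) * t ^ (k - 1) * t ≤ (∑ i ∈ Finset.range k, t ^ i) * t :=
        mul_le_mul_of_nonneg_right hsum (le_of_lt ht0)
      have h3 : (k : ℝ) * t ^ (k - 1) * t = (k : ℝ) * t ^ k := by
        rw [mul_assoc, hpow]
      have h4 : a * (1 - t) * ((k : ℝ) * t ^ k) ≤ a * (1 - t) * ((∑ i ∈ Finset.range k, t ^ i) * t) := by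
        apply mul_le_mul_of_nonneg_left _ (by nlinarith)
        rw [← h3]; exact h2
      have h5 : (1 - t) * 1 ≤ (1 - t) * (a * (k : ℝ) * t ^ k) :=
        mul_le_mul_of_nonneg_left (by rw [htdef] at hak ⊢; linarith) (by linarith)
      nlinarith
    have heq : (1 - t) / t = 1 / t - 1 := by field_simp
    linarith
  linarith

/-- Converse for the SPC-based CSA scheme: for expected channel load `c > 1/(k+1)`
and `a = c (k+1)/k`, the density-evolution recursion `p₀ = 1 - exp (-a)`,
`p_ℓ = 1 - exp (-a (1 - (1 - p_{ℓ-1})^k))` stays bounded away from `0`;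
in particular it does not converge to `0`. -/
theorem spc_de_does_not_converge_above_capacity (k : ℕ) (hk : 1 ≤ k) (c : ℝ)
    (hc : 1 / ((k : ℝ) + 1) < c) (a : ℝ) (ha : a = c * ((k : ℝ) + 1) / k)
    (p : ℕ → ℝ) (hp0 : p 0 = 1 - Real.exp (-a))
    (hrec : ∀ ℓ : ℕ, p (ℓ + 1) = 1 - Real.exp (-a * (1 - (1 - p ℓ) ^ k))) :
    (∃ ε > 0, ∀ ℓ : ℕ, ε ≤ p ℓ) ∧ ¬ Filter.Tendsto p Filter.atTop (nhds 0) := by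
  have hk0 : (0 : ℝ) < k := by exact_mod_cast hk
  have hk1 : (0 : ℝ) < (k : ℝ) + 1 := by linarith
  have hc0 : 0 < c := lt_trans (by positivity) hc
  have ha0 : 0 < a := by rw [ha]; positivity
  have hak : 1 < a * k := by
    have : a * k = c * ((k : ℝ) + 1) := by
      rw [ha]; field_simp
    rw [this]
    calc (1 : ℝ) = (1 / ((k : ℝ) + 1)) * ((k : ℝ) + 1) := by field_simp
      _ < c * ((k : ℝ) + 1) := by
        exact mul_lt_mul_of_pos_right hc hk1
  -- choose δ = 1 - (a k)^(-1/k)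
  set r : ℝ := (a * k) ^ (-(1 : ℝ) / k) with hrdef
  have hr0 : 0 < r := Real.rpow_pos_of_pos (by positivity) _
  have hr1 : r < 1 :=
    Real.rpow_lt_one_of_one_lt_of_neg hak (div_neg_of_neg_of_pos (by norm_num) hk0)
  set δ : ℝ := 1 - r with hδdef
  have hδ0 : 0 < δ := by simp [hδdef]; linarith
  have hδ1 : δ < 1 := by simp [hδdef]; linarith
  -- key: p ≤ δ ⇒ a k (1-p)^k ≥ 1
  have hkey : ∀ q : ℝ, q ≤ δ → 0 < q → 1 ≤ a * k * (1 - q) ^ k := by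
    intro q hq hq0
    have hrq : r ≤ 1 - q := by simp [hδdef] at hq; linarith
    have hrk : r ^ k = (a * k)⁻¹ := by
      rw [hrdef, ← Real.rpow_natCast ((a*k) ^ (-(1:ℝ)/k)) k, ← Real.rpow_mul (by positivity)]
      have : -(1 : ℝ) / k * k = -1 := by field_simp
      rw [this, Real.rpow_neg_one]
    have h1 : r ^ k ≤ (1 - q) ^ k := pow_le_pow_left₀ (le_of_lt hr0) hrq k
    rw [hrk] at h1
    have h2 : a * k * (a * k)⁻¹ ≤ a * k * (1 - q) ^ k :=
      mul_le_mul_of_nonneg_left h1 (by positivity)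
    rwa [mul_inv_cancel₀ (by positivity)] at h2
  have hpexp : Real.exp (-a) < 1 := by
    rw [Real.exp_lt_one_iff]; linarith
  have hp0pos : 0 < p 0 := by rw [hp0]; linarith
  set ε : ℝ := min δ (p 0) with hεdef
  have hε0 : 0 < ε := lt_min hδ0 hp0pos
  have hεδ : ε ≤ δ := min_le_left _ _
  have hε1 : ε < 1 := lt_of_le_of_lt hεδ hδ1
  -- invariant
  have hinv : ∀ ℓ : ℕ, ε ≤ p ℓ ∧ p ℓ < 1 := by
    intro ℓ
    induction ℓ with
    | zero =>
      constructor
      · exact min_le_right _ _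
      · rw [hp0]; have := Real.exp_pos (-a); linarith
    | succ n ih =>
      obtain ⟨ihl, ihu⟩ := ih
      constructor
      · -- F(p n) ≥ F(ε) ≥ ε
        have hmono : Real.exp (-a * (1 - (1 - p n) ^ k)) ≤
            Real.exp (-a * (1 - (1 - ε) ^ k)) := by
          apply Real.exp_le_exp.mpr
          have hpow : (1 - p n) ^ k ≤ (1 - ε) ^ k :=
            pow_le_pow_left₀ (by linarith) (by linarith) k
          nlinarith
        have hFε : ε ≤ 1 - Real.exp (-a * (1 - (1 - ε) ^ k)) :=
          spc_aux_F_ge k hk a ha0 ε hε0 hε1 (hkey ε hεδ hε0)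
        rw [hrec n]
        linarith
      · rw [hrec n]
        have := Real.exp_pos (-a * (1 - (1 - p n) ^ k))
        linarith
  refine ⟨⟨ε, hε0, fun ℓ => (hinv ℓ).1⟩, ?_⟩
  intro htend
  have := (htend.eventually (eventually_lt_nhds hε0)).exists
  obtain ⟨ℓ, hℓ⟩ := this
  exact absurd (hinv ℓ).1 (not_le.mpr hℓ)
end
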